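/- Dissipation along closed-loop trajectories: let X ⊆ ℝⁿ, let V : ℝⁿ → ℝ be differentiable and satisfy the HJI equation at every point of X, let w : ℝ → ℝ^q, let I be an interval, and let x : ℝ → ℝⁿ be differentiable on I with x(t) ∈ X and x'(t) = f(x(t)) + g(x(t))·u_V(x(t)) + k(x(t))·w(t) for all t ∈ I. Then for every t ∈ I the function τ ↦ V(x(τ)) has derivative at t equal to γ²·‖w(t)‖² − ‖h(x(t))‖² − ⟨u_V(x(t)), R·u_V(x(t))⟩ − γ²·‖w(t) − w_V(x(t))‖², and hence this derivative is at most γ²·‖w(t)‖² − ‖h(x(t))‖² − ⟨u_V(x(t)), R·u_V(x(t))⟩. -/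

import Mathlib

/-!
By the chain rule, `d/dt V(x t) = ⟨∇V, f + g u_V + k w⟩`, which equals
`H_V(x, u_V, w) - ‖h‖² - ⟨u_V, R u_V⟩ + γ²‖w‖²` for the Hamiltonian `H_V`. Completing the square in `w` gives
`H_V(x, u_V, w) = H_V(x, u_V, w_V) - γ²‖w - w_V‖²`, and `H_V(x, u_V, w_V)` is the left-hand side
of the HJI equation, hence zero.
-/

open Matrix

/-- Matrix–vector multiplication, valued in Euclidean space. -/
noncomputable def mv {a b : ℕ} (M : Matrix (Fin a) (Fin b) ℝ)
    (v : EuclideanSpace ℝ (Fin b)) : EuclideanSpace ℝ (Fin a) :=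
  WithLp.toLp 2 (M.mulVec v)

/-- The control policy `u_V(x) = -(1/2) R⁻¹ g(x)ᵀ ∇V(x)`. -/
noncomputable def uPol {n m : ℕ}
    (g : EuclideanSpace ℝ (Fin n) → Matrix (Fin n) (Fin m) ℝ)
    (R : Matrix (Fin m) (Fin m) ℝ)
    (V : EuclideanSpace ℝ (Fin n) → ℝ)
    (x : EuclideanSpace ℝ (Fin n)) : EuclideanSpace ℝ (Fin m) :=
  (-(1/2 : ℝ)) • mv R⁻¹ (mv (g x)ᵀ (gradient V x))

/-- The disturbance policy `w_V(x) = (1/(2γ²)) k(x)ᵀ ∇V(x)`. -/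
noncomputable def wPol {n q : ℕ}
    (k : EuclideanSpace ℝ (Fin n) → Matrix (Fin n) (Fin q) ℝ)
    (γ : ℝ)
    (V : EuclideanSpace ℝ (Fin n) → ℝ)
    (x : EuclideanSpace ℝ (Fin n)) : EuclideanSpace ℝ (Fin q) :=
  (1/(2*γ^2)) • mv (k x)ᵀ (gradient V x)

/-- The Hamiltonian `H_V(x,u,w)`. -/
noncomputable def Ham {n m q p : ℕ}
    (f : EuclideanSpace ℝ (Fin n) → EuclideanSpace ℝ (Fin n))
    (g : EuclideanSpace ℝ (Fin n) → Matrix (Fin n) (Fin m) ℝ)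
    (k : EuclideanSpace ℝ (Fin n) → Matrix (Fin n) (Fin q) ℝ)
    (h : EuclideanSpace ℝ (Fin n) → EuclideanSpace ℝ (Fin p))
    (R : Matrix (Fin m) (Fin m) ℝ) (γ : ℝ)
    (V : EuclideanSpace ℝ (Fin n) → ℝ)
    (x : EuclideanSpace ℝ (Fin n))
    (u : EuclideanSpace ℝ (Fin m)) (w : EuclideanSpace ℝ (Fin q)) : ℝ :=
  (inner ℝ (gradient V x) (f x + mv (g x) u + mv (k x) w) : ℝ)
    + ‖h x‖^2 + (inner ℝ u (mv R u) : ℝ) - γ^2 * ‖w‖^2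

/-- `V` satisfies the HJI equation at `x`. -/
def HJIAt {n m q p : ℕ}
    (f : EuclideanSpace ℝ (Fin n) → EuclideanSpace ℝ (Fin n))
    (g : EuclideanSpace ℝ (Fin n) → Matrix (Fin n) (Fin m) ℝ)
    (k : EuclideanSpace ℝ (Fin n) → Matrix (Fin n) (Fin q) ℝ)
    (h : EuclideanSpace ℝ (Fin n) → EuclideanSpace ℝ (Fin p))
    (R : Matrix (Fin m) (Fin m) ℝ) (γ : ℝ)
    (V : EuclideanSpace ℝ (Fin n) → ℝ)
    (x : EuclideanSpace ℝ (Fin n)) : Prop :=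
  (inner ℝ (gradient V x) (f x) : ℝ) + ‖h x‖^2
    - (1/4) * (inner ℝ (mv (g x)ᵀ (gradient V x)) (mv R⁻¹ (mv (g x)ᵀ (gradient V x))) : ℝ)
    + (1/(4*γ^2)) * ‖mv (k x)ᵀ (gradient V x)‖^2 = 0

theorem HasGradientAt.comp_hasDerivAt {F : Type*} [NormedAddCommGroup F] [InnerProductSpace ℝ F]
    [CompleteSpace F] {V : F → ℝ} {V' : F} {x : ℝ → F} {x' : F} {t : ℝ}
    (hV : HasGradientAt V V' (x t)) (hx : HasDerivAt x x' t) :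
    HasDerivAt (fun τ => V (x τ)) (inner ℝ V' x') t :=
  hV.hasFDerivAt.comp_hasDerivAt t hx

theorem inner_mv_right {a b : ℕ} (M : Matrix (Fin a) (Fin b) ℝ) (u : EuclideanSpace ℝ (Fin a))
    (v : EuclideanSpace ℝ (Fin b)) :
    (inner ℝ u (mv M v) : ℝ) = inner ℝ (mv Mᵀ u) v := by
  simp only [mv, EuclideanSpace.inner_eq_star_dotProduct, star_trivial, dotProduct_mulVec,
    vecMul_transpose, dotProduct_comm]

theorem mv_smul {a b : ℕ} (M : Matrix (Fin a) (Fin b) ℝ) (c : ℝ) (v : EuclideanSpace ℝ (Fin b)) :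
    mv M (c • v) = c • mv M v := by
  simp [mv, mulVec_smul]

theorem mv_mv_nonsing_inv {a : ℕ} {R : Matrix (Fin a) (Fin a) ℝ} (hR : IsUnit R.det)
    (v : EuclideanSpace ℝ (Fin a)) : mv R (mv R⁻¹ v) = v := by
  simp [mv, mulVec_mulVec, mul_nonsing_inv R hR]

section Policies

variable {n m q p : ℕ}
    {f : EuclideanSpace ℝ (Fin n) → EuclideanSpace ℝ (Fin n)}
    {g : EuclideanSpace ℝ (Fin n) → Matrix (Fin n) (Fin m) ℝ}
    {k : EuclideanSpace ℝ (Fin n) → Matrix (Fin n) (Fin q) ℝ}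
    {h : EuclideanSpace ℝ (Fin n) → EuclideanSpace ℝ (Fin p)}
    {R : Matrix (Fin m) (Fin m) ℝ} {γ : ℝ} {V : EuclideanSpace ℝ (Fin n) → ℝ}
    {x : EuclideanSpace ℝ (Fin n)}

theorem inner_gradient_mv_uPol :
    (inner ℝ (gradient V x) (mv (g x) (uPol g R V x)) : ℝ)
      = -(1/2) * inner ℝ (mv (g x)ᵀ (gradient V x)) (mv R⁻¹ (mv (g x)ᵀ (gradient V x))) := by
  rw [inner_mv_right, uPol, real_inner_smul_right]

theorem inner_uPol_mv_uPol (hR : IsUnit R.det) :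
    (inner ℝ (uPol g R V x) (mv R (uPol g R V x)) : ℝ)
      = (1/4) * inner ℝ (mv (g x)ᵀ (gradient V x)) (mv R⁻¹ (mv (g x)ᵀ (gradient V x))) := by
  rw [uPol, mv_smul, mv_mv_nonsing_inv hR, real_inner_smul_left, real_inner_smul_right,
    real_inner_comm]
  ring

theorem sq_mul_norm_sub_wPol_sq (hγ : γ ≠ 0) (w : EuclideanSpace ℝ (Fin q)) :
    γ^2 * ‖w - wPol k γ V x‖^2 = γ^2 * ‖w‖^2 - inner ℝ (gradient V x) (mv (k x) w)
      + (1/(4*γ^2)) * ‖mv (k x)ᵀ (gradient V x)‖^2 := by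
  rw [wPol, norm_sub_sq_real, real_inner_smul_right, norm_smul, mul_pow, Real.norm_eq_abs,
    sq_abs, inner_mv_right, transpose_transpose, real_inner_comm]
  field_simp
  ring

theorem HJIAt.ham_uPol (hHJI : HJIAt f g k h R γ V x) (hR : IsUnit R.det) (hγ : γ ≠ 0)
    (w : EuclideanSpace ℝ (Fin q)) :
    Ham f g k h R γ V x (uPol g R V x) w = -(γ^2 * ‖w - wPol k γ V x‖^2) := by
  rw [Ham, inner_add_right, inner_add_right, inner_gradient_mv_uPol, inner_uPol_mv_uPol hR,
    sq_mul_norm_sub_wPol_sq hγ]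
  unfold HJIAt at hHJI
  linear_combination hHJI

end Policies

theorem dissipation_along_trajectories_general {n m q p : ℕ}
    (f : EuclideanSpace ℝ (Fin n) → EuclideanSpace ℝ (Fin n))
    (g : EuclideanSpace ℝ (Fin n) → Matrix (Fin n) (Fin m) ℝ)
    (k : EuclideanSpace ℝ (Fin n) → Matrix (Fin n) (Fin q) ℝ)
    (h : EuclideanSpace ℝ (Fin n) → EuclideanSpace ℝ (Fin p))
    (R : Matrix (Fin m) (Fin m) ℝ) (hR : R.PosDef)
    (γ : ℝ) (hγ : 0 < γ)
    (X : Set (EuclideanSpace ℝ (Fin n)))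
    (V : EuclideanSpace ℝ (Fin n) → ℝ)
    (hV : ∀ y ∈ X, DifferentiableAt ℝ V y)
    (hHJI : ∀ y ∈ X, HJIAt f g k h R γ V y)
    (w : ℝ → EuclideanSpace ℝ (Fin q))
    (I : Set ℝ)
    (x : ℝ → EuclideanSpace ℝ (Fin n))
    (hxX : ∀ t ∈ I, x t ∈ X)
    (hx : ∀ t ∈ I, HasDerivAt x
      (f (x t) + mv (g (x t)) (uPol g R V (x t)) + mv (k (x t)) (w t)) t) :
    ∀ t ∈ I,
      HasDerivAt (fun τ => V (x τ))
          (γ^2 * ‖w t‖^2 - ‖h (x t)‖^2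
            - (inner ℝ (uPol g R V (x t)) (mv R (uPol g R V (x t))) : ℝ)
            - γ^2 * ‖w t - wPol k γ V (x t)‖^2) t
        ∧ (γ^2 * ‖w t‖^2 - ‖h (x t)‖^2
            - (inner ℝ (uPol g R V (x t)) (mv R (uPol g R V (x t))) : ℝ)
            - γ^2 * ‖w t - wPol k γ V (x t)‖^2)
          ≤ γ^2 * ‖w t‖^2 - ‖h (x t)‖^2
            - (inner ℝ (uPol g R V (x t)) (mv R (uPol g R V (x t))) : ℝ) := by
  intro t ht
  have hd := (hV _ (hxX t ht)).hasGradientAt.comp_hasDerivAt (hx t ht)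
  have hHam := (hHJI _ (hxX t ht)).ham_uPol hR.det_pos.ne'.isUnit hγ.ne' (w t)
  rw [Ham] at hHam
  refine ⟨hd.congr_deriv (by linarith), ?_⟩
  have hsq : 0 ≤ γ^2 * ‖w t - wPol k γ V (x t)‖^2 := by positivity
  linarith

/-- **Dissipation along closed-loop trajectories.**  If `V` is differentiable and satisfies
the HJI equation at every point of `X`, and `x` solves the closed-loop dynamics
`x' = f(x) + g(x) u_V(x) + k(x) w(t)` in `X` on the interval `I`, then for every `t ∈ I`
the map `τ ↦ V(x τ)` has derivative
`γ²‖w t‖² - ‖h(x t)‖² - ⟨u_V(x t), R u_V(x t)⟩ - γ²‖w t - w_V(x t)‖²` at `t`, which is at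
most `γ²‖w t‖² - ‖h(x t)‖² - ⟨u_V(x t), R u_V(x t)⟩`. -/
theorem dissipation_along_trajectories {n m q p : ℕ}
    (f : EuclideanSpace ℝ (Fin n) → EuclideanSpace ℝ (Fin n))
    (g : EuclideanSpace ℝ (Fin n) → Matrix (Fin n) (Fin m) ℝ)
    (k : EuclideanSpace ℝ (Fin n) → Matrix (Fin n) (Fin q) ℝ)
    (h : EuclideanSpace ℝ (Fin n) → EuclideanSpace ℝ (Fin p))
    (R : Matrix (Fin m) (Fin m) ℝ) (hR : R.PosDef)
    (γ : ℝ) (hγ : 0 < γ)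
    (X : Set (EuclideanSpace ℝ (Fin n)))
    (V : EuclideanSpace ℝ (Fin n) → ℝ)
    (hV : ∀ y ∈ X, DifferentiableAt ℝ V y)
    (hHJI : ∀ y ∈ X, HJIAt f g k h R γ V y)
    (w : ℝ → EuclideanSpace ℝ (Fin q))
    (I : Set ℝ) (hI : I.OrdConnected)
    (x : ℝ → EuclideanSpace ℝ (Fin n))
    (hxX : ∀ t ∈ I, x t ∈ X)
    (hx : ∀ t ∈ I, HasDerivAt x
      (f (x t) + mv (g (x t)) (uPol g R V (x t)) + mv (k (x t)) (w t)) t) :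
    ∀ t ∈ I,
      HasDerivAt (fun τ => V (x τ))
          (γ^2 * ‖w t‖^2 - ‖h (x t)‖^2
            - (inner ℝ (uPol g R V (x t)) (mv R (uPol g R V (x t))) : ℝ)
            - γ^2 * ‖w t - wPol k γ V (x t)‖^2) t
        ∧ (γ^2 * ‖w t‖^2 - ‖h (x t)‖^2
            - (inner ℝ (uPol g R V (x t)) (mv R (uPol g R V (x t))) : ℝ)
            - γ^2 * ‖w t - wPol k γ V (x t)‖^2)
          ≤ γ^2 * ‖w t‖^2 - ‖h (x t)‖^2
            - (inner ℝ (uPol g R V (x t)) (mv R (uPol g R V (x t))) : ℝ) :=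
  dissipation_along_trajectories_general f g k h R hR γ hγ X V hV hHJI w I x hxX hx
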